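/- arXiv:1911.06909 — 4 statements merged into one kernel-verified Lean document; each statement's English description precedes it below -/
import Mathlib

section
/- Let ν ∈ S^{n-1} be an irrational direction, ε > 0, and let H be the hyperplane {y ∈ ℝ^n : (y - x₀)·ν = 0} through a point x₀. Then for every z ∈ ℝ^n and every δ > 0, there exists w ∈ H and a lattice point k ∈ ℤ^n such that |z - w - εk| ≤ δ. -/
/-!
The values `⟪k, ν⟫`, `k ∈ ℤⁿ`, form an additive subgroup of `ℝ` containing every coordinate of `ν`.
A subgroup of `ℝ` is either dense or cyclic, and if it were cyclic, `aℤ` say, then `ν` would be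
`a` times an integer vector. So these values are dense, and for any `z` we can pick `k` with
`⟪z - εk - x₀, ν⟫` as small as we like; projecting `z - εk` orthogonally onto the hyperplane
then moves it by exactly that much.
-/

open scoped RealInnerProductSpace

theorem AddSubgroup.dense_closure_of_forall_not_subset_zmultiples {s : Set ℝ}
    (hs : ∀ a : ℝ, ¬ s ⊆ AddSubgroup.zmultiples a) : Dense (AddSubgroup.closure s : Set ℝ) := by
  obtain hdense | ⟨a, ha⟩ := (AddSubgroup.closure s).dense_or_cyclic
  · exact hdense
  · refine absurd ?_ (hs a)
    rw [← AddSubgroup.zmultiples_eq_closure] at ha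
    exact ha ▸ AddSubgroup.subset_closure

section Lattice

variable {ι : Type*}

theorem exists_eq_smul_intCast_of_forall_mem_zmultiples {ν : EuclideanSpace ℝ ι} {a : ℝ}
    (h : ∀ i, ν i ∈ AddSubgroup.zmultiples a) :
    ∃ m : ι → ℤ, ν = a • (show EuclideanSpace ℝ ι from WithLp.toLp 2 (fun i => (m i : ℝ))) := by
  choose m hm using h
  refine ⟨m, ?_⟩
  ext i
  simp [← hm i, mul_comm]

variable [Fintype ι]

noncomputable def latticePairing (ν : EuclideanSpace ℝ ι) : (ι → ℤ) →+ ℝ where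
  toFun k := ⟪WithLp.toLp 2 (fun i => (k i : ℝ)), ν⟫
  map_zero' := by simp [PiLp.inner_apply]
  map_add' a b := by simp [PiLp.inner_apply, mul_add, Finset.sum_add_distrib]

theorem latticePairing_single [DecidableEq ι] (ν : EuclideanSpace ℝ ι) (i : ι) :
    latticePairing ν (Pi.single i 1) = ν i := by
  simp [latticePairing, PiLp.inner_apply, Pi.single_apply]

theorem dense_range_latticePairing {ν : EuclideanSpace ℝ ι}
    (hirr : ¬ ∃ (t : ℝ) (m : ι → ℤ),
      ν = t • (show EuclideanSpace ℝ ι from WithLp.toLp 2 (fun i => (m i : ℝ)))) :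
    Dense ((latticePairing ν).range : Set ℝ) := by
  classical
  have hcoord : Set.range ν ⊆ (latticePairing ν).range := by
    rintro _ ⟨i, rfl⟩
    exact ⟨Pi.single i 1, latticePairing_single ν i⟩
  refine (AddSubgroup.dense_closure_of_forall_not_subset_zmultiples fun a ha => hirr ?_).mono
    ((AddSubgroup.closure_le _).2 hcoord)
  exact ⟨a, exists_eq_smul_intCast_of_forall_mem_zmultiples fun i => ha ⟨i, rfl⟩⟩

end Lattice

theorem exists_inner_sub_eq_zero_norm_sub_eq {E : Type*} [NormedAddCommGroup E]
    [InnerProductSpace ℝ E] {ν : E} (hν : ‖ν‖ = 1) (p x₀ : E) :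
    ∃ w : E, ⟪w - x₀, ν⟫ = 0 ∧ ‖p - w‖ = |⟪p - x₀, ν⟫| := by
  refine ⟨p - ⟪p - x₀, ν⟫ • ν, ?_, ?_⟩
  · rw [sub_right_comm, inner_sub_left, real_inner_smul_left, real_inner_self_eq_norm_sq, hν]
    ring
  · rw [sub_sub_cancel, norm_smul, hν, mul_one, Real.norm_eq_abs]

theorem irrational_hyperplane_dense_mod_lattice_general (n : ℕ)
    (ν : EuclideanSpace ℝ (Fin n)) (hν : ‖ν‖ = 1)
    (hirr : ¬ ∃ (t : ℝ) (z : Fin n → ℤ),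
      ν = t • (show EuclideanSpace ℝ (Fin n) from WithLp.toLp 2 (fun i => (z i : ℝ))))
    (ε : ℝ) (hε : 0 < ε) (x₀ : EuclideanSpace ℝ (Fin n)) :
    ∀ (z : EuclideanSpace ℝ (Fin n)) (δ : ℝ), 0 < δ →
      ∃ (w : EuclideanSpace ℝ (Fin n)) (k : Fin n → ℤ),
        ⟪w - x₀, ν⟫ = 0 ∧
        ‖z - w - ε • (show EuclideanSpace ℝ (Fin n) from WithLp.toLp 2 (fun i => (k i : ℝ)))‖ ≤ δ := by
  intro z δ hδ
  set c := ⟪z - x₀, ν⟫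
  obtain ⟨_, hk, k, rfl⟩ :=
    Metric.dense_iff.1 (dense_range_latticePairing hirr) (c / ε) (δ / ε) (by positivity)
  set K : EuclideanSpace ℝ (Fin n) := WithLp.toLp 2 (fun i => (k i : ℝ))
  obtain ⟨w, hw, hdist⟩ := exists_inner_sub_eq_zero_norm_sub_eq hν (z - ε • K) x₀
  refine ⟨w, k, hw, ?_⟩
  rw [sub_right_comm, hdist, sub_right_comm, inner_sub_left, real_inner_smul_left]
  calc |c - ε * latticePairing ν k| = |ε * (c / ε - latticePairing ν k)| := by
        rw [mul_sub, mul_div_cancel₀ _ hε.ne']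
    _ = ε * dist (latticePairing ν k) (c / ε) := by
        rw [abs_mul, abs_of_pos hε, Real.dist_eq, abs_sub_comm]
    _ ≤ δ := (lt_div_iff₀' hε).1 hk |>.le

/-- Lemma A.3 (c): a hyperplane with irrational normal direction is dense modulo the
lattice `ε·ℤ^n`. -/
theorem irrational_hyperplane_dense_mod_lattice (n : ℕ) (hn : 0 < n)
    (ν : EuclideanSpace ℝ (Fin n)) (hν : ‖ν‖ = 1)
    (hirr : ¬ ∃ (t : ℝ) (z : Fin n → ℤ),
      ν = t • (show EuclideanSpace ℝ (Fin n) from WithLp.toLp 2 (fun i => (z i : ℝ))))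
    (ε : ℝ) (hε : 0 < ε) (x₀ : EuclideanSpace ℝ (Fin n)) :
    ∀ (z : EuclideanSpace ℝ (Fin n)) (δ : ℝ), 0 < δ →
      ∃ (w : EuclideanSpace ℝ (Fin n)) (k : Fin n → ℤ),
        ⟪w - x₀, ν⟫ = 0 ∧
        ‖z - w - ε • (show EuclideanSpace ℝ (Fin n) from WithLp.toLp 2 (fun i => (k i : ℝ)))‖ ≤ δ :=
  irrational_hyperplane_dense_mod_lattice_general n ν hν hirr ε hε x₀
end

section
/- Let ν ∈ S^{n-1} be an irrational direction with |ν_n| = max_j |ν_j|, let m satisfy (1,...,1,m)·ν = 0, and let ω_ν(N) = D_m(N) denote the discrepancy of (km)_k modulo 1. Then there exists a dimensional constant M > 0 such that: for any ε > 0, any point x₀, the hyperplane H_d = {y : (y-x₀)·ν = 0}, any x ∈ H_d, and any N ∈ ℕ with N ≥ 1, there exists y ∈ ℝ^n with |x - y| ≤ M·N·ε + ε·ω_ν(N), y ≡ x₀ (mod ε·ℤ^n), and dist(y, H_d) ≤ ε·ω_ν(N). -/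
open scoped RealInnerProductSpace Classical

/-- `A(E;N)` for `E = [a,b)`: the number of `1 ≤ k ≤ N` with `frac (k·x) ∈ [a,b)`. -/
noncomputable def countFract (x : ℝ) (N : ℕ) (a b : ℝ) : ℕ :=
  ((Finset.Icc 1 N).filter (fun k : ℕ => Int.fract ((k : ℝ) * x) ∈ Set.Ico a b)).card

/-- The discrepancy `D_x(N)` of the sequence `(k·x)` modulo 1. -/
noncomputable def discrepancy (x : ℝ) (N : ℕ) : ℝ :=
  sSup {r : ℝ | ∃ a b : ℝ, 0 ≤ a ∧ a ≤ b ∧ b ≤ 1 ∧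
    r = |(countFract x N a b : ℝ) / N - (b - a)|}

/-!
Put `w = (x - x₀)/ε`, so that `w · ν = 0`, and let `i₀` be the coordinate where `|ν|` is largest.
Rounding the other coordinates of `w` down and shifting them all by the same integer `j ≤ N`
changes `k · ν` by `j (1,…,1,0) · ν = -j m ν_{i₀}`; after the `i₀`-th coordinate is rounded to an
integer `t`, one gets `k · ν = ν_{i₀} (t - j m - β)` for a real `β` depending only on `w`.
Since the points `j m`, `1 ≤ j ≤ N`, leave no gap longer than `2 D_m(N)` modulo `1`, `j` and `t`
can be chosen with `|t - j m - β| ≤ D_m(N)`, and all coordinates of `w - k` are `O(N)`.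
-/

open Finset

section Discrepancy

variable (x : ℝ) (N : ℕ)

lemma countFract_le (a b : ℝ) : countFract x N a b ≤ N := by
  simpa [countFract] using
    card_filter_le (Icc 1 N) fun k : ℕ => Int.fract ((k : ℝ) * x) ∈ Set.Ico a b

lemma bddAbove_discrepancy_set : BddAbove {r : ℝ | ∃ a b : ℝ, 0 ≤ a ∧ a ≤ b ∧ b ≤ 1 ∧
    r = |(countFract x N a b : ℝ) / N - (b - a)|} := by
  refine ⟨1, ?_⟩
  rintro r ⟨a, b, ha, hab, hb, rfl⟩
  have h₀ : 0 ≤ (countFract x N a b : ℝ) / N := by positivity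
  have h₁ : (countFract x N a b : ℝ) / N ≤ 1 :=
    div_le_one_of_le₀ (by exact_mod_cast countFract_le x N a b) N.cast_nonneg
  rw [abs_le]
  constructor <;> linarith

lemma abs_countFract_div_sub_le_discrepancy {a b : ℝ} (ha : 0 ≤ a) (hab : a ≤ b) (hb : b ≤ 1) :
    |(countFract x N a b : ℝ) / N - (b - a)| ≤ discrepancy x N :=
  le_csSup (bddAbove_discrepancy_set x N) ⟨a, b, ha, hab, hb, rfl⟩

lemma discrepancy_nonneg : 0 ≤ discrepancy x N :=
  (abs_nonneg _).trans (abs_countFract_div_sub_le_discrepancy x N le_rfl le_rfl zero_le_one)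

variable {x N}

lemma exists_abs_fract_sub_le_discrepancy (hN : 1 ≤ N) {α : ℝ} (hα₀ : 0 ≤ α) (hα₁ : α ≤ 1) :
    ∃ j ∈ Icc 1 N, |Int.fract ((j : ℝ) * x) - α| ≤ discrepancy x N := by
  -- otherwise `[α - E, α + E] ∩ [0, 1]`, for some `E > D`, misses every `fract (j x)`
  by_contra! hfar
  set D := discrepancy x N
  have h1 : 1 ∈ Icc 1 N := mem_Icc.2 ⟨le_rfl, hN⟩
  obtain ⟨E, hDE, hE⟩ := exists_between ((lt_inf'_iff ⟨1, h1⟩).2 hfar)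
  have hgap : ∀ j ∈ Icc 1 N, E < |Int.fract ((j : ℝ) * x) - α| :=
    fun j hj => hE.trans_le (inf'_le _ hj)
  have hE₁ : E ≤ 1 := by
    refine (hgap 1 h1).le.trans (abs_le.2 ⟨?_, ?_⟩) <;>
      linarith [Int.fract_nonneg (((1 : ℕ) : ℝ) * x), Int.fract_lt_one (((1 : ℕ) : ℝ) * x)]
  have hE₀ : 0 ≤ E := (discrepancy_nonneg x N).trans hDE.le
  set a := max 0 (α - E)
  set b := min 1 (α + E)
  have hlen : E ≤ b - a := by
    rcases max_cases 0 (α - E) with ⟨ha, -⟩ | ⟨ha, -⟩ <;>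
      rcases min_cases 1 (α + E) with ⟨hb, -⟩ | ⟨hb, -⟩ <;>
      simp only [a, b, ha, hb] <;> linarith
  have hempty : countFract x N a b = 0 := by
    refine card_eq_zero.2 (filter_eq_empty_iff.2 fun k hk hmem => (hgap k hk).not_ge ?_)
    rw [abs_le]
    constructor <;> linarith [le_max_right 0 (α - E), min_le_right 1 (α + E), hmem.1, hmem.2]
  have := abs_countFract_div_sub_le_discrepancy x N (le_max_left 0 (α - E))
    (show a ≤ b by linarith) (min_le_left 1 (α + E))
  rw [hempty, Nat.cast_zero, zero_div, zero_sub, abs_neg, abs_of_nonneg (by linarith)] at this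
  linarith

lemma exists_abs_nat_mul_add_sub_int_le_discrepancy (hN : 1 ≤ N) (β : ℝ) :
    ∃ j ∈ Icc 1 N, ∃ t : ℤ, |(j : ℝ) * x + β - t| ≤ discrepancy x N := by
  obtain ⟨j, hj, h⟩ := exists_abs_fract_sub_le_discrepancy hN (Int.fract_nonneg (-β))
    (Int.fract_lt_one (-β)).le
  refine ⟨j, hj, ⌊(j : ℝ) * x⌋ - ⌊-β⌋, ?_⟩
  convert h using 2
  push_cast
  rw [Int.fract, Int.fract]
  ring

end Discrepancy

lemma abs_sum_mul_div_le_card {ι : Type*} (s : Finset ι) (c v : ι → ℝ) {a : ℝ}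
    (hc : ∀ i ∈ s, |c i| ≤ 1) (hv : ∀ i ∈ s, |v i| ≤ |a|) :
    |(∑ i ∈ s, c i * v i) / a| ≤ #s := by
  rcases eq_or_ne a 0 with rfl | ha
  · simp
  rw [abs_div, div_le_iff₀ (abs_pos.2 ha)]
  calc |∑ i ∈ s, c i * v i| ≤ ∑ i ∈ s, |c i * v i| := abs_sum_le_sum_abs _ _
    _ ≤ ∑ i ∈ s, |a| := sum_le_sum fun i hi => by
        rw [abs_mul]
        nlinarith [hc i hi, hv i hi, abs_nonneg (c i), abs_nonneg (v i)]
    _ = #s * |a| := by rw [sum_const, nsmul_eq_mul]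

lemma abs_le_card_of_mul_add_sum_eq_zero {ι : Type*} (s : Finset ι) {v : ι → ℝ} {a m : ℝ}
    (ha : a ≠ 0) (hv : ∀ i ∈ s, |v i| ≤ |a|) (h : m * a + ∑ i ∈ s, v i = 0) : |m| ≤ #s := by
  have hm : m = (∑ i ∈ s, (-1) * v i) / a := by
    rw [eq_div_iff ha, sum_congr rfl fun i _ => neg_one_mul (v i), sum_neg_distrib]
    linarith
  exact hm ▸ abs_sum_mul_div_le_card s _ _ (fun _ _ => by simp) hv

lemma sum_ite_mul_eq_mul_add_sum_erase {ι : Type*} [Fintype ι] [DecidableEq ι] (i₀ : ι)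
    (m : ℝ) (v : ι → ℝ) :
    ∑ i, (if i = i₀ then m else 1) * v i = m * v i₀ + ∑ i ∈ univ.erase i₀, v i := by
  rw [← add_sum_erase _ _ (mem_univ i₀), if_pos rfl]
  congr 1
  exact sum_congr rfl fun i hi => by rw [if_neg (ne_of_mem_erase hi), one_mul]

lemma EuclideanSpace.norm_le_sum_abs {ι : Type*} [Fintype ι] (v : EuclideanSpace ℝ ι) :
    ‖v‖ ≤ ∑ i, |v i| := by
  rw [EuclideanSpace.norm_eq, Real.sqrt_le_left (by positivity)]
  simpa using sum_sq_le_sq_sum_of_nonneg (s := univ) fun i _ => abs_nonneg (v i)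

lemma apply_ne_zero_of_forall_abs_le {ι : Type*} {v : ι → ℝ} {i₀ : ι} (hv : v ≠ 0)
    (hmax : ∀ j, |v j| ≤ |v i₀|) : v i₀ ≠ 0 := by
  contrapose! hv
  ext j
  simpa [hv] using hmax j

theorem exists_int_near_of_sum_mul_eq_zero {ι : Type*} [Fintype ι] [DecidableEq ι]
    (ν w : ι → ℝ) {i₀ : ι} (hmax : ∀ j, |ν j| ≤ |ν i₀|) (hν₀ : ν i₀ ≠ 0) (hν₁ : |ν i₀| ≤ 1)
    {m : ℝ} (hm : ∑ i, (if i = i₀ then m else 1) * ν i = 0) (hw : ∑ i, w i * ν i = 0)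
    {N : ℕ} (hN : 1 ≤ N) :
    ∃ k : ι → ℤ, ∑ i, |w i - k i| ≤ 3 * Fintype.card ι * N + discrepancy m N ∧
      |∑ i, (k i : ℝ) * ν i| ≤ discrepancy m N := by
  set s := univ.erase i₀
  set D := discrepancy m N
  have hm' : m * ν i₀ + ∑ i ∈ s, ν i = 0 := (sum_ite_mul_eq_mul_add_sum_erase i₀ m ν).symm.trans hm
  have hw' : w i₀ * ν i₀ + ∑ i ∈ s, w i * ν i = 0 :=
    (add_sum_erase univ (fun i => w i * ν i) (mem_univ i₀)).trans hw
  have hmax' : ∀ i ∈ s, |ν i| ≤ |ν i₀| := fun i _ => hmax i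
  have hm_le : |m| ≤ #s := abs_le_card_of_mul_add_sum_eq_zero s hν₀ hmax' hm'
  -- rounding down the coordinates `i ≠ i₀` of `w` changes `w · ν = 0` by `-δ ν i₀`
  set δ := (∑ i ∈ s, Int.fract (w i) * ν i) / ν i₀
  have hδ : δ * ν i₀ = ∑ i ∈ s, Int.fract (w i) * ν i := div_mul_cancel₀ _ hν₀
  have hδ_le : |δ| ≤ #s := abs_sum_mul_div_le_card s _ _
    (fun i _ => abs_le.2 ⟨by linarith [Int.fract_nonneg (w i)], (Int.fract_lt_one _).le⟩) hmax'
  obtain ⟨j, hj, t, ht⟩ := exists_abs_nat_mul_add_sub_int_le_discrepancy (x := m) hN (w i₀ + δ)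
  have hjN : (j : ℝ) ≤ N := by exact_mod_cast (mem_Icc.1 hj).2
  set k : ι → ℤ := fun i => if i = i₀ then t else ⌊w i⌋ + j
  have hk₀ : k i₀ = t := if_pos rfl
  have hk : ∀ i ∈ s, (k i : ℝ) = w i - Int.fract (w i) + j := fun i hi => by
    simp only [k, if_neg (ne_of_mem_erase hi), Int.self_sub_fract]
    push_cast
    ring
  refine ⟨k, ?_, ?_⟩
  · have hN₁ : (1 : ℝ) ≤ N := by exact_mod_cast hN
    have hrest : ∑ i ∈ s, |w i - k i| ≤ #s * N := by
      refine (sum_le_sum fun i hi => ?_).trans_eq (by rw [sum_const, nsmul_eq_mul])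
      rw [hk i hi, abs_le]
      constructor <;> linarith [Int.fract_nonneg (w i), Int.fract_lt_one (w i)]
    have hjm : |j * m| ≤ N * #s := by
      rw [abs_mul, Nat.abs_cast]
      exact mul_le_mul hjN hm_le (abs_nonneg m) N.cast_nonneg
    have hfirst : |w i₀ - t| ≤ D + N * #s + #s :=
      calc |w i₀ - t| = |(j * m + (w i₀ + δ) - t) - j * m - δ| := by ring_nf
        _ ≤ |j * m + (w i₀ + δ) - t| + |j * m| + |δ| :=
          (abs_sub _ _).trans (by gcongr; exact abs_sub _ _)
        _ ≤ D + N * #s + #s := by gcongr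
    have hs : (#s : ℝ) ≤ Fintype.card ι := by exact_mod_cast card_erase_le
    rw [← add_sum_erase _ _ (mem_univ i₀), hk₀]
    nlinarith [mul_le_mul hs hN₁ zero_le_one (Nat.cast_nonneg _)]
  · have hsum : ∑ i, (k i : ℝ) * ν i = ν i₀ * (t - (j * m + (w i₀ + δ))) := by
      rw [← add_sum_erase _ _ (mem_univ i₀), hk₀, sum_congr rfl fun i hi => by rw [hk i hi]]
      simp only [add_mul, sub_mul, sum_add_distrib, sum_sub_distrib, ← mul_sum]
      linear_combination hw' + hδ + (j : ℝ) * hm'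
    rw [hsum, abs_mul, abs_sub_comm]
    exact (mul_le_mul hν₁ ht (abs_nonneg _) zero_le_one).trans_eq (one_mul D)

theorem irrational_hyperplane_lattice_approx_general (n : ℕ)
    (ν : EuclideanSpace ℝ (Fin n)) (hν : ‖ν‖ = 1)
    (i₀ : Fin n)
    (hmax : ∀ j : Fin n, |ν j| ≤ |ν i₀|)
    (m : ℝ) (hm : ∑ i : Fin n, (if i = i₀ then m else 1) * ν i = 0)
    (ω : ℕ → ℝ) (hω : ∀ N, ω N = discrepancy m N) :
    ∃ M : ℝ, 0 < M ∧
      ∀ (ε : ℝ), 0 < ε → ∀ (x₀ x : EuclideanSpace ℝ (Fin n)), ⟪x - x₀, ν⟫ = 0 →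
        ∀ N : ℕ, 1 ≤ N →
          ∃ y : EuclideanSpace ℝ (Fin n),
            ‖x - y‖ ≤ M * N * ε + ε * ω N ∧
            (∃ k : Fin n → ℤ,
              y - x₀ = ε • (show EuclideanSpace ℝ (Fin n) from WithLp.toLp 2 (fun i => (k i : ℝ)))) ∧
            |⟪y - x₀, ν⟫| ≤ ε * ω N := by
  have hν₀ : ν i₀ ≠ 0 := apply_ne_zero_of_forall_abs_le (v := ⇑ν)
    (fun h => by simp [show ν = 0 from WithLp.ofLp_injective 2 h] at hν) hmax
  have hν₁ : |ν i₀| ≤ 1 := hν ▸ PiLp.norm_apply_le ν i₀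
  refine ⟨3 * n, by have := i₀.pos; positivity, fun ε hε x₀ x hx N hN => ?_⟩
  set w : EuclideanSpace ℝ (Fin n) := ε⁻¹ • (x - x₀)
  have hw : ∑ i, w i * ν i = 0 := by
    have : ⟪w, ν⟫ = 0 := by rw [inner_smul_left, hx, mul_zero]
    simpa [PiLp.inner_apply, mul_comm] using this
  obtain ⟨k, hwk, hkν⟩ := exists_int_near_of_sum_mul_eq_zero ν w hmax hν₀ hν₁ hm hw hN
  set K : EuclideanSpace ℝ (Fin n) := WithLp.toLp 2 fun i => (k i : ℝ)
  refine ⟨x₀ + ε • K, ?_, ⟨k, add_sub_cancel_left _ _⟩, ?_⟩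
  · have hxy : x - (x₀ + ε • K) = ε • (w - K) := by
      simp only [w, smul_sub, smul_smul, mul_inv_cancel₀ hε.ne', one_smul]
      abel
    rw [hxy, norm_smul, Real.norm_of_nonneg hε.le, hω]
    calc ε * ‖w - K‖ ≤ ε * ∑ i, |w i - k i| := by
          gcongr
          exact EuclideanSpace.norm_le_sum_abs _
      _ ≤ ε * (3 * n * N + discrepancy m N) := by
          gcongr
          simpa using hwk
      _ = 3 * n * N * ε + ε * discrepancy m N := by ring
  · rw [add_sub_cancel_left, inner_smul_left, hω, abs_mul, RCLike.conj_to_real,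
      abs_of_pos hε]
    gcongr
    simpa [K, PiLp.inner_apply, mul_comm] using hkν

/-- Lemma A.3 (b): near-lattice points on hyperplanes with irrational normal. -/
theorem irrational_hyperplane_lattice_approx (n : ℕ) (hn : 0 < n)
    (ν : EuclideanSpace ℝ (Fin n)) (hν : ‖ν‖ = 1)
    (hirr : ¬ ∃ (t : ℝ) (z : Fin n → ℤ),
      ν = t • (show EuclideanSpace ℝ (Fin n) from WithLp.toLp 2 (fun i => (z i : ℝ))))
    (i₀ : Fin n) (hi₀ : (i₀ : ℕ) = n - 1)
    (hmax : ∀ j : Fin n, |ν j| ≤ |ν i₀|)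
    (m : ℝ) (hm : ∑ i : Fin n, (if i = i₀ then m else 1) * ν i = 0)
    (ω : ℕ → ℝ) (hω : ∀ N, ω N = discrepancy m N) :
    ∃ M : ℝ, 0 < M ∧
      ∀ (ε : ℝ), 0 < ε → ∀ (x₀ x : EuclideanSpace ℝ (Fin n)), ⟪x - x₀, ν⟫ = 0 →
        ∀ N : ℕ, 1 ≤ N →
          ∃ y : EuclideanSpace ℝ (Fin n),
            ‖x - y‖ ≤ M * N * ε + ε * ω N ∧
            (∃ k : Fin n → ℤ,
              y - x₀ = ε • (show EuclideanSpace ℝ (Fin n) from WithLp.toLp 2 (fun i => (k i : ℝ)))) ∧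
            |⟪y - x₀, ν⟫| ≤ ε * ω N :=
  irrational_hyperplane_lattice_approx_general n ν hν i₀ hmax m hm ω hω
end

section
/- Let m > 0, c ∈ (0,1), and suppose G : ℝ^n × ℝ^n → ℝ is differentiable in p with |∇_p G(p,x)| ≤ m and |∇_p G(p,x)·ν| ≤ c for a fixed unit vector ν. Let q₁, q₂ ∈ ℝ^n with q_i·ν = 0. If a function u₁ satisfies the boundary identity ν·∇u₁(x) = G(∇u₁(x), x) at a point x, then w₊ = u₁ + (q₂-q₁)·x + (m/(1-c))|q₁-q₂|·(x·ν) satisfies ν·∇w₊(x) ≥ G(∇w₊(x), x), and w₋ = u₁ + (q₂-q₁)·x - (m/(1-c))|q₁-q₂|·(x·ν) satisfies ν·∇w₋(x) ≤ G(∇w₋(x), x). -/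
open scoped RealInnerProductSpace

/-!
Shifting the gradient `p` by `d + s • ν` with `d ⟂ ν` raises `⟪ν, p⟫` by exactly `s`, while by
the mean value theorem along the segment `G` moves by at most `m ‖d‖ + c |s|`: only the
`ν`-component of the shift is damped by the obliqueness constant `c < 1`. So the oblique defect
`⟪ν, p⟫ - G p` moves by `s` up to `m ‖d‖ + c |s|`, and `s = ± L` with `L = m ‖d‖ + c L`, i.e.
`L = (m / (1 - c)) ‖d‖`, gives the shifted defect the required sign.
-/

section

variable {E : Type*} [NormedAddCommGroup E] [InnerProductSpace ℝ E]

def obliqueDefect (G : E → ℝ) (ν p : E) : ℝ := ⟪ν, p⟫ - G p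

theorem abs_sub_le_of_hasGradientAt_of_abs_inner_le [CompleteSpace E] {f : E → ℝ}
    {f' : E → E} (hf : ∀ p, HasGradientAt f (f' p) p) {v : E} {K : ℝ}
    (hK : ∀ q, |⟪f' q, v⟫| ≤ K) (p : E) : |f (p + v) - f p| ≤ K := by
  have hderiv : ∀ t : ℝ, HasDerivAt (fun t : ℝ => f (p + t • v)) ⟪f' (p + t • v), v⟫ t := by
    intro t
    have hline : HasDerivAt (fun t : ℝ => p + t • v) v t := by
      simpa using ((hasDerivAt_id t).smul_const v).const_add p
    simpa [Function.comp_def] using (hf (p + t • v)).hasFDerivAt.comp_hasDerivAt t hline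
  simpa using norm_image_sub_le_of_norm_deriv_le_segment_01'
    (fun t _ => (hderiv t).hasDerivWithinAt) (fun t _ => by simpa using hK (p + t • v))

theorem abs_inner_add_smul_le {a d ν : E} {m c : ℝ} (ha : ‖a‖ ≤ m) (haν : |⟪a, ν⟫| ≤ c)
    (s : ℝ) : |⟪a, d + s • ν⟫| ≤ m * ‖d‖ + c * |s| :=
  calc |⟪a, d + s • ν⟫| = |⟪a, d⟫ + s * ⟪a, ν⟫| := by
        rw [inner_add_right, real_inner_smul_right]
    _ ≤ |⟪a, d⟫| + |s| * |⟪a, ν⟫| := by rw [← abs_mul]; exact abs_add_le _ _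
    _ ≤ ‖a‖ * ‖d‖ + |s| * c := by
        gcongr
        exact abs_real_inner_le_norm a d
    _ ≤ m * ‖d‖ + c * |s| := by rw [mul_comm |s|]; gcongr

theorem abs_obliqueDefect_add_smul_sub_le [CompleteSpace E] {G : E → ℝ} {g : E → E}
    {ν d p : E} {m c : ℝ} (hg : ∀ p, HasGradientAt G (g p) p) (hgm : ∀ p, ‖g p‖ ≤ m)
    (hgν : ∀ p, |⟪g p, ν⟫| ≤ c) (hν : ‖ν‖ = 1) (hd : ⟪ν, d⟫ = 0)
    (hp : obliqueDefect G ν p = 0) (s : ℝ) :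
    |obliqueDefect G ν (p + d + s • ν) - s| ≤ m * ‖d‖ + c * |s| := by
  have hνν : ⟪ν, ν⟫ = 1 := by rw [real_inner_self_eq_norm_sq, hν, one_pow]
  have hshift : obliqueDefect G ν (p + d + s • ν) - s = G p - G (p + (d + s • ν)) := by
    unfold obliqueDefect at hp ⊢
    rw [← add_assoc, inner_add_right, inner_add_right, real_inner_smul_right, hd, hνν]
    linarith
  rw [hshift, abs_sub_comm]
  exact abs_sub_le_of_hasGradientAt_of_abs_inner_le hg
    (fun q => abs_inner_add_smul_le (hgm q) (hgν q) s) p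

end

theorem oblique_lipschitz_in_q_general (n : ℕ) (m c : ℝ) (hc1 : c < 1)
    (ν : EuclideanSpace ℝ (Fin n)) (hν : ‖ν‖ = 1)
    (G : EuclideanSpace ℝ (Fin n) → EuclideanSpace ℝ (Fin n) → ℝ)
    (g : EuclideanSpace ℝ (Fin n) → EuclideanSpace ℝ (Fin n) → EuclideanSpace ℝ (Fin n))
    (hg : ∀ p x, HasGradientAt (fun p' => G p' x) (g p x) p)
    (hgb : ∀ p x, ‖g p x‖ ≤ m)
    (hobl : ∀ p x, |⟪g p x, ν⟫| ≤ c)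
    (q₁ q₂ : EuclideanSpace ℝ (Fin n)) (hq₁ : ⟪q₁, ν⟫ = 0) (hq₂ : ⟪q₂, ν⟫ = 0)
    (x Du₁ : EuclideanSpace ℝ (Fin n))
    (hbc : ⟪ν, Du₁⟫ = G Du₁ x) :
    ⟪ν, Du₁ + (q₂ - q₁) + ((m / (1 - c)) * ‖q₁ - q₂‖) • ν⟫
        ≥ G (Du₁ + (q₂ - q₁) + ((m / (1 - c)) * ‖q₁ - q₂‖) • ν) x ∧
      ⟪ν, Du₁ + (q₂ - q₁) - ((m / (1 - c)) * ‖q₁ - q₂‖) • ν⟫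
        ≤ G (Du₁ + (q₂ - q₁) - ((m / (1 - c)) * ‖q₁ - q₂‖) • ν) x := by
  set L := (m / (1 - c)) * ‖q₁ - q₂‖ with hLdef
  have hc : 0 < 1 - c := sub_pos.2 hc1
  have hL : 0 ≤ L := by
    have hm : 0 ≤ m := (norm_nonneg _).trans (hgb 0 x)
    positivity
  have hfix : m * ‖q₂ - q₁‖ + c * L = L := by
    rw [norm_sub_rev, hLdef]; field_simp; ring
  have hd : ⟪ν, q₂ - q₁⟫ = 0 := by
    rw [inner_sub_right, real_inner_comm, hq₂, real_inner_comm, hq₁, sub_zero]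
  have hdefect := abs_obliqueDefect_add_smul_sub_le (G := (G · x)) (hg · x) (hgb · x)
    (hobl · x) hν hd (sub_eq_zero.2 hbc)
  have hplus := abs_le.1 (hdefect L)
  have hminus := abs_le.1 (hdefect (-L))
  rw [abs_of_nonneg hL, hfix] at hplus
  rw [abs_neg, abs_of_nonneg hL, hfix] at hminus
  unfold obliqueDefect at hplus hminus
  rw [sub_eq_add_neg _ (L • ν), ← neg_smul]
  constructor <;> linarith

/-- The algebraic heart of the Lipschitz-in-`q` estimate (Theorem 5.1): shifting a
solution of the oblique condition by `(q₂-q₁)·x ± (m/(1-c))|q₁-q₂|(x·ν)` produces a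
super/subsolution of the boundary condition. -/
theorem oblique_lipschitz_in_q (n : ℕ) (m c : ℝ) (hm : 0 < m) (hc0 : 0 < c) (hc1 : c < 1)
    (ν : EuclideanSpace ℝ (Fin n)) (hν : ‖ν‖ = 1)
    (G : EuclideanSpace ℝ (Fin n) → EuclideanSpace ℝ (Fin n) → ℝ)
    (g : EuclideanSpace ℝ (Fin n) → EuclideanSpace ℝ (Fin n) → EuclideanSpace ℝ (Fin n))
    (hg : ∀ p x, HasGradientAt (fun p' => G p' x) (g p x) p)
    (hgb : ∀ p x, ‖g p x‖ ≤ m)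
    (hobl : ∀ p x, |⟪g p x, ν⟫| ≤ c)
    (q₁ q₂ : EuclideanSpace ℝ (Fin n)) (hq₁ : ⟪q₁, ν⟫ = 0) (hq₂ : ⟪q₂, ν⟫ = 0)
    (x Du₁ : EuclideanSpace ℝ (Fin n))
    (hbc : ⟪ν, Du₁⟫ = G Du₁ x) :
    ⟪ν, Du₁ + (q₂ - q₁) + ((m / (1 - c)) * ‖q₁ - q₂‖) • ν⟫
        ≥ G (Du₁ + (q₂ - q₁) + ((m / (1 - c)) * ‖q₁ - q₂‖) • ν) x ∧
      ⟪ν, Du₁ + (q₂ - q₁) - ((m / (1 - c)) * ‖q₁ - q₂‖) • ν⟫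
        ≤ G (Du₁ + (q₂ - q₁) - ((m / (1 - c)) * ‖q₁ - q₂‖) • ν) x :=
  oblique_lipschitz_in_q_general n m c hc1 ν hν G g hg hgb hobl q₁ q₂ hq₁ hq₂ x Du₁ hbc
end

section
/- Fix constants n ≥ 2, Λ ≥ λ > 0, R > 0, and a unit vector ν = e_n. Define w : ℝ^n → ℝ by w(x) = (a + b)·(x_n + 1) + 2(|x'|² - (Λn/λ)(x_n² - 1))/R², where x = (x', x_n) and a, b ≥ 0. Then the Hessian D²w satisfies P⁺(D²w) ≥ 0 (i.e., w is a supersolution of the Pucci maximal equation), and on the boundary {x_n = 0} ∩ {|x| ≤ R}, the normal derivative satisfies ∂w/∂x_n ≥ a + |D_T w| whenever b ≥ 4/R, where D_T w = (∂w/∂x_1, ..., ∂w/∂x_{n-1}) is the tangential gradient. -/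
/-!
`w` is a quadratic polynomial whose Hessian is the constant diagonal matrix
`diag(4/R², …, 4/R², -4Λn/(λR²))`, so `P⁺(D²w) = -Λ(n-1)·4/R² + 4Λn/R² = 4Λ/R² ≥ 0`.
On `{x_n = 0}` the normal derivative is `a + b`, while the tangential gradient is `4x'/R²`,
of length at most `4/R ≤ b` on the ball of radius `R`.
-/

/-- The Pucci maximal operator `P⁺(M) = -Λ·tr(M₊) + λ·tr(M₋)`, defined via the
eigenvalues of the symmetric matrix `M`. -/
noncomputable def pucciPlus (lam Lam : ℝ) {n : ℕ} (M : Matrix (Fin n) (Fin n) ℝ) : ℝ :=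
  if h : M.IsHermitian then
    -Lam * ∑ i, max (h.eigenvalues i) 0 + lam * ∑ i, max (-(h.eigenvalues i)) 0
  else 0

open Matrix Finset

theorem Matrix.IsHermitian.map_eigenvalues_diagonal {ι : Type*} [Fintype ι] [DecidableEq ι]
    {d : ι → ℝ} (h : (diagonal d).IsHermitian) :
    univ.val.map h.eigenvalues = univ.val.map d := by
  have h_roots := h.roots_charpoly_eq_eigenvalues
  rw [charpoly_diagonal, Polynomial.roots_prod _ _
    (by simp [prod_ne_zero_iff, Polynomial.X_sub_C_ne_zero])] at h_roots
  simpa using h_roots.symm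

theorem Matrix.IsHermitian.sum_eigenvalues_diagonal {ι M : Type*} [Fintype ι] [DecidableEq ι]
    [AddCommMonoid M] {d : ι → ℝ} (h : (diagonal d).IsHermitian) (f : ℝ → M) :
    ∑ i, f (h.eigenvalues i) = ∑ i, f (d i) := by
  simpa [Multiset.map_map] using congrArg (fun s => (s.map f).sum) h.map_eigenvalues_diagonal

theorem pucciPlus_diagonal (lam Lam : ℝ) {n : ℕ} (d : Fin n → ℝ) :
    pucciPlus lam Lam (diagonal d) = -Lam * ∑ i, max (d i) 0 + lam * ∑ i, max (-d i) 0 := by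
  have h : (diagonal d).IsHermitian := isHermitian_diagonal d
  rw [pucciPlus, dif_pos h, h.sum_eigenvalues_diagonal (max · 0),
    h.sum_eigenvalues_diagonal (fun t => max (-t) 0)]

theorem pucciPlus_diagonal_ite (lam Lam : ℝ) {n : ℕ} (i₀ : Fin n) {p q : ℝ} (hp : 0 ≤ p)
    (hq : 0 ≤ q) :
    pucciPlus lam Lam (diagonal fun k => if k = i₀ then -q else p) =
      -Lam * (((n : ℝ) - 1) * p) + lam * q := by
  have hpos (k : Fin n) : max (if k = i₀ then -q else p) 0 = if k = i₀ then 0 else p := by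
    split_ifs <;> simp [hp, hq]
  have hneg (k : Fin n) : max (-if k = i₀ then -q else p) 0 = if k = i₀ then q else 0 := by
    split_ifs <;> simp [hp, hq]
  have hcount : ∑ k : Fin n, (if k = i₀ then 0 else p) = ((n : ℝ) - 1) * p := by
    simp [sum_ite, filter_ne', Nat.cast_sub (Nat.one_le_of_lt i₀.pos)]
  simp only [pucciPlus_diagonal, hpos, hneg, hcount, sum_ite_eq', mem_univ, if_true]

theorem iteratedFDeriv_two_apply_of_hasFDerivAt_add {𝕜 E F : Type*} [NontriviallyNormedField 𝕜]
    [NormedAddCommGroup E] [NormedSpace 𝕜 E] [NormedAddCommGroup F] [NormedSpace 𝕜 F]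
    {f : E → F} (L : E →L[𝕜] F) (A : E →L[𝕜] E →L[𝕜] F)
    (hf : ∀ x, HasFDerivAt f (L + A x) x) (x u v : E) :
    iteratedFDeriv 𝕜 2 f x ![u, v] = A u v := by
  have hf' : fderiv 𝕜 f = fun x => L + A x := funext fun x => (hf x).fderiv
  rw [iteratedFDeriv_two_apply, hf', (A.hasFDerivAt.const_add L).fderiv]
  rfl

namespace EuclideanSpace

variable {ι : Type*} [Fintype ι]

noncomputable def diagForm (c : ι → ℝ) :
    EuclideanSpace ℝ ι →L[ℝ] EuclideanSpace ℝ ι →L[ℝ] ℝ :=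
  ∑ k, c k • (proj k).smulRight (proj k)

theorem diagForm_apply (c : ι → ℝ) (u v : EuclideanSpace ℝ ι) :
    diagForm c u v = ∑ k, c k * u k * v k := by
  simp [diagForm, mul_assoc]

theorem hasFDerivAt_sum_mul_sq (c : ι → ℝ) (x : EuclideanSpace ℝ ι) :
    HasFDerivAt (fun x : EuclideanSpace ℝ ι => ∑ k, c k * x k ^ 2) (diagForm (2 • c) x) x := by
  have hk (k : ι) : HasFDerivAt (fun x : EuclideanSpace ℝ ι => c k * x k ^ 2)
      ((2 * c k * x k) • proj (𝕜 := ℝ) k) x := by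
    refine (((proj (𝕜 := ℝ) k).hasFDerivAt.pow 2).const_mul (c k)).congr_fderiv ?_
    ext v
    simp
    ring
  refine (HasFDerivAt.fun_sum fun k _ => hk k).congr_fderiv ?_
  ext v
  simp [diagForm_apply]

theorem sqrt_sum_sq_le_norm (s : Finset ι) (x : EuclideanSpace ℝ ι) :
    √(∑ i ∈ s, x i ^ 2) ≤ ‖x‖ := by
  rw [EuclideanSpace.norm_eq]
  gcongr
  simp_rw [Real.norm_eq_abs, sq_abs]
  exact sum_le_univ_sum_of_nonneg fun i => sq_nonneg _

variable [DecidableEq ι]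

theorem diagForm_apply_single (c : ι → ℝ) (u : EuclideanSpace ℝ ι) (j : ι) :
    diagForm c u (single j 1) = c j * u j := by
  simp [diagForm_apply, PiLp.single_apply]

theorem diagForm_single_single (c : ι → ℝ) (i j : ι) :
    diagForm c (single i 1) (single j 1) = diagonal c i j := by
  rw [diagForm_apply_single, PiLp.single_apply, diagonal_apply]
  split_ifs <;> simp_all

theorem hasFDerivAt_barrier (i₀ : ι) (α K R : ℝ) {w : EuclideanSpace ℝ ι → ℝ}
    (hw : ∀ x : EuclideanSpace ℝ ι,
      w x = α * (x i₀ + 1) + 2 * ((∑ i ∈ univ.erase i₀, x i ^ 2) - K * (x i₀ ^ 2 - 1)) / R ^ 2)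
    (x : EuclideanSpace ℝ ι) :
    HasFDerivAt w
      (α • proj i₀ + diagForm (fun k => if k = i₀ then -(4 * K / R ^ 2) else 4 / R ^ 2) x) x := by
  set c : ι → ℝ := fun k => if k = i₀ then -(2 * K / R ^ 2) else 2 / R ^ 2
  have hc : 2 • c = fun k => if k = i₀ then -(4 * K / R ^ 2) else 4 / R ^ 2 := by
    ext k
    simp only [c, Pi.smul_apply]
    split_ifs <;> ring
  have hsum (x : EuclideanSpace ℝ ι) : ∑ k, c k * x k ^ 2 =
      -(2 * K / R ^ 2) * x i₀ ^ 2 + 2 / R ^ 2 * ∑ k ∈ univ.erase i₀, x k ^ 2 := by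
    rw [← add_sum_erase _ _ (mem_univ i₀), mul_sum]
    congr 1
    · simp [c]
    · exact sum_congr rfl fun k hk => by simp [c, ne_of_mem_erase hk]
  have hw' : w = fun x => α * x i₀ + ∑ k, c k * x k ^ 2 + (α + 2 * K / R ^ 2) := by
    ext x
    rw [hw, hsum]
    ring
  rw [hw', ← hc]
  exact (((proj i₀).hasFDerivAt.const_mul α).add (hasFDerivAt_sum_mul_sq c x)).add_const _

end EuclideanSpace

open EuclideanSpace in
theorem barrier_computation_general (n : ℕ) (lam Lam R a b : ℝ)
    (hlam : 0 < lam) (hLam : lam ≤ Lam) (hR : 0 < R)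
    (i₀ : Fin n)
    (w : EuclideanSpace ℝ (Fin n) → ℝ)
    (hw : ∀ x : EuclideanSpace ℝ (Fin n),
      w x = (a + b) * (x i₀ + 1) +
        2 * ((∑ i ∈ Finset.univ.erase i₀, (x i) ^ 2)
          - (Lam * n / lam) * ((x i₀) ^ 2 - 1)) / R ^ 2) :
    (∀ x : EuclideanSpace ℝ (Fin n),
      0 ≤ pucciPlus lam Lam (Matrix.of fun i j : Fin n =>
        iteratedFDeriv ℝ 2 w x ![EuclideanSpace.single i 1, EuclideanSpace.single j 1])) ∧
    (b ≥ 4 / R → ∀ x : EuclideanSpace ℝ (Fin n), x i₀ = 0 → ‖x‖ ≤ R →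
      fderiv ℝ w x (EuclideanSpace.single i₀ 1) ≥
        a + Real.sqrt (∑ i ∈ Finset.univ.erase i₀,
          (fderiv ℝ w x (EuclideanSpace.single i 1)) ^ 2)) := by
  have hLam₀ : 0 ≤ Lam := hlam.le.trans hLam
  have hw' := hasFDerivAt_barrier i₀ (a + b) (Lam * n / lam) R hw
  refine ⟨fun x => ?_, fun hb x hx₀ hxR => ?_⟩
  · have hD2w : (Matrix.of fun i j => iteratedFDeriv ℝ 2 w x ![single i 1, single j 1]) =
        diagonal fun k => if k = i₀ then -(4 * (Lam * n / lam) / R ^ 2) else 4 / R ^ 2 := by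
      ext i j
      rw [of_apply, iteratedFDeriv_two_apply_of_hasFDerivAt_add _ _ hw', diagForm_single_single]
    have hP : -Lam * (((n : ℝ) - 1) * (4 / R ^ 2)) + lam * (4 * (Lam * n / lam) / R ^ 2) =
        4 * Lam / R ^ 2 := by
      field_simp
      ring
    rw [hD2w, pucciPlus_diagonal_ite lam Lam i₀ (by positivity) (by positivity), hP]
    positivity
  · have hDw (i : Fin n) : fderiv ℝ w x (single i 1) =
        (a + b) * (if i₀ = i then 1 else 0) +
          (if i = i₀ then -(4 * (Lam * n / lam) / R ^ 2) else 4 / R ^ 2) * x i := by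
      simp [(hw' x).fderiv, diagForm_apply_single, PiLp.single_apply]
    have hDTw : ∑ i ∈ univ.erase i₀, fderiv ℝ w x (single i 1) ^ 2 =
        ∑ i ∈ univ.erase i₀, ((4 / R ^ 2) • x) i ^ 2 :=
      sum_congr rfl fun i hi => by
        have hi₀ := ne_of_mem_erase hi
        simp [hDw, hi₀, Ne.symm hi₀]
    calc a + √(∑ i ∈ univ.erase i₀, fderiv ℝ w x (single i 1) ^ 2)
        ≤ a + ‖(4 / R ^ 2) • x‖ := by rw [hDTw]; gcongr; exact sqrt_sum_sq_le_norm _ _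
      _ = a + 4 / R ^ 2 * ‖x‖ := by rw [norm_smul, Real.norm_of_nonneg (by positivity)]
      _ ≤ a + 4 / R ^ 2 * R := by gcongr
      _ = a + 4 / R := by field_simp
      _ ≤ fderiv ℝ w x (single i₀ 1) := by simp [hDw, hx₀]; linarith

/-- Barrier computation (Lemma 3.5): the explicit quadratic barrier `w` satisfies
`P⁺(D²w) ≥ 0`, and on `{x_n = 0} ∩ {|x| ≤ R}` its normal derivative dominates
`a + |D_T w|` as soon as `b ≥ 4/R`. -/
theorem barrier_computation (n : ℕ) (hn : 2 ≤ n) (lam Lam R a b : ℝ)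
    (hlam : 0 < lam) (hLam : lam ≤ Lam) (hR : 0 < R) (ha : 0 ≤ a) (hb : 0 ≤ b)
    (i₀ : Fin n) (hi₀ : (i₀ : ℕ) = n - 1)
    (w : EuclideanSpace ℝ (Fin n) → ℝ)
    (hw : ∀ x : EuclideanSpace ℝ (Fin n),
      w x = (a + b) * (x i₀ + 1) +
        2 * ((∑ i ∈ Finset.univ.erase i₀, (x i) ^ 2)
          - (Lam * n / lam) * ((x i₀) ^ 2 - 1)) / R ^ 2) :
    (∀ x : EuclideanSpace ℝ (Fin n),
      0 ≤ pucciPlus lam Lam (Matrix.of fun i j : Fin n =>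
        iteratedFDeriv ℝ 2 w x ![EuclideanSpace.single i 1, EuclideanSpace.single j 1])) ∧
    (b ≥ 4 / R → ∀ x : EuclideanSpace ℝ (Fin n), x i₀ = 0 → ‖x‖ ≤ R →
      fderiv ℝ w x (EuclideanSpace.single i₀ 1) ≥
        a + Real.sqrt (∑ i ∈ Finset.univ.erase i₀,
          (fderiv ℝ w x (EuclideanSpace.single i 1)) ^ 2)) :=
  barrier_computation_general n lam Lam R a b hlam hLam hR i₀ w hw
end
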